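/- Let n ≥ 4, let V be a set of n vertices, and let X ⊆ V satisfy n/3 < |X| < n. Then the 3-uniform hypergraph H on V whose edges are exactly the triples e ⊆ V with |e∩X| ≠ 2 contains no tight Hamiltonian cycle. -/

import Mathlib

open Finset

variable {V : Type} [Fintype V] [DecidableEq V]

/-- The degree of a vertex in a hypergraph given by its edge set. -/
def hypDeg (E : Finset (Finset V)) (v : V) : ℕ :=
  (E.filter (fun e => v ∈ e)).card

/-- The pair degree of two vertices in a hypergraph. -/
def pairDeg (E : Finset (Finset V)) (u v : V) : ℕ :=
  (E.filter (fun e => u ∈ e ∧ v ∈ e)).card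

/-- The joint neighbourhood `N(u,v) = {w : uvw ∈ E}`. -/
def jointNbhd (E : Finset (Finset V)) (u v : V) : Finset V :=
  Finset.univ.filter (fun w => ({u, v, w} : Finset V) ∈ E)

/-- A 3-uniform hypergraph has a tight Hamiltonian cycle: a cyclic ordering of all
vertices such that every three cyclically consecutive vertices form an edge. -/
def HasTightHamCycle (E : Finset (Finset V)) : Prop :=
  ∃ x : ZMod (Fintype.card V) → V, Function.Bijective x ∧
    ∀ i : ZMod (Fintype.card V), ({x i, x (i + 1), x (i + 2)} : Finset V) ∈ E

/-- The link graph of a vertex `v`. -/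
def linkGraph (E : Finset (Finset V)) (v : V) : SimpleGraph V where
  Adj x y := x ≠ y ∧ ({v, x, y} : Finset V) ∈ E
  symm := by
    constructor
    rintro x y ⟨hxy, he⟩
    exact ⟨hxy.symm, by rwa [Finset.pair_comm y x]⟩
  loopless := ⟨fun x h => h.1 rfl⟩

instance (E : Finset (Finset V)) (v : V) : DecidableRel (linkGraph E v).Adj :=
  fun x y => inferInstanceAs (Decidable (x ≠ y ∧ ({v, x, y} : Finset V) ∈ E))

/-- Number of edges of a graph with both endpoints in `A`. -/
def eIn (G : SimpleGraph V) [DecidableRel G.Adj] (A : Finset V) : ℕ :=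
  (G.edgeFinset.filter (fun e => e ∈ A.sym2)).card

/-- Number of edges of a graph with one endpoint in `A` and one in `B`
(for disjoint `A` `B`, as the count of ordered pairs). -/
def eBetween (G : SimpleGraph V) [DecidableRel G.Adj] (A B : Finset V) : ℕ :=
  ((A ×ˢ B).filter (fun p => G.Adj p.1 p.2)).card

/-- Number of `x`-`y` paths of length `k` in the subgraph of `G` induced on `A`. -/
noncomputable def pathCount (G : SimpleGraph V) (A : Finset V) (x y : V) (k : ℕ) : ℕ :=
  Nat.card {p : Fin (k + 1) → V // Function.Injective p ∧ (∀ i, p i ∈ A) ∧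
    p ⟨0, by omega⟩ = x ∧ p ⟨k, by omega⟩ = y ∧
    ∀ (i : ℕ) (h : i + 1 < k + 1), G.Adj (p ⟨i, by omega⟩) (p ⟨i + 1, h⟩)}

/-- The subgraph of `G` induced on `A` is `(β,ℓ)`-robust. -/
def IsRobust (G : SimpleGraph V) (A : Finset V) (β : ℝ) (ℓ : ℕ) : Prop :=
  ∀ x ∈ A, ∀ y ∈ A, x ≠ y → β * (A.card : ℝ) ^ (ℓ - 1) ≤ (pathCount G A x y ℓ : ℝ)

/-- The subgraph of `L` induced on `U` is `μ`-inseparable. -/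
def IsInseparable (L : SimpleGraph V) [DecidableRel L.Adj] (U : Finset V) (μ : ℝ) : Prop :=
  (∀ v ∈ U, μ * (U.card : ℝ) ≤ ((U.filter (fun u => L.Adj v u)).card : ℝ)) ∧
  (∀ X Y : Finset V, Disjoint X Y → X ∪ Y = U →
    μ * (U.card : ℝ) ≤ (X.card : ℝ) → μ * (U.card : ℝ) ≤ (Y.card : ℝ) →
    μ ^ 2 * (U.card : ℝ) ^ 2 ≤ (eBetween L X Y : ℝ))

/-- The Setup: a `3`-uniform hypergraph `E` with minimum vertex degree at least
`(5/9+α)n²/2` together with, for each vertex `v`, (the vertex set `Rv v` of) an induced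
subgraph `R_v` of the link graph `L_v` as provided by the Robust subgraphs proposition. -/
def SetupHyp (α β : ℝ) (ℓ : ℕ) (E : Finset (Finset V)) (Rv : V → Finset V) : Prop :=
  (∀ e ∈ E, e.card = 3) ∧
  (∀ v : V, (5/9 + α) * (Fintype.card V : ℝ) ^ 2 / 2 ≤ (hypDeg E v : ℝ)) ∧
  (∀ v : V, (2/3 + α/2) * (Fintype.card V : ℝ) ≤ ((Rv v).card : ℝ)) ∧
  (∀ v : V, (eBetween (linkGraph E v) (Rv v) (Rv v)ᶜ : ℝ) ≤ α * (Fintype.card V : ℝ) ^ 2 / 4) ∧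
  (∀ v : V, (5/9 + α/2) * (Fintype.card V : ℝ) ^ 2 / 2
      - ((Fintype.card V : ℝ) - ((Rv v).card : ℝ)) ^ 2 / 2 ≤ (eIn (linkGraph E v) (Rv v) : ℝ)) ∧
  (∀ v : V, IsRobust (linkGraph E v) (Rv v) β ℓ)

/-- The pair `xy` is `ζ`-connectable: `xy` is an edge of `R_v` for at least `ζn` vertices `v`. -/
def Connectable (E : Finset (Finset V)) (Rv : V → Finset V) (ζ : ℝ) (x y : V) : Prop :=
  ζ * (Fintype.card V : ℝ) ≤
    (({v : V | x ∈ Rv v ∧ y ∈ Rv v ∧ (linkGraph E v).Adj x y} : Set V).ncard : ℝ)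

/-- `f` enumerates the vertices of a tight path (of length `m - 2`) in the hypergraph `E`. -/
def IsTightPath (E : Finset (Finset V)) {m : ℕ} (f : Fin m → V) : Prop :=
  Function.Injective f ∧
  ∀ (i : ℕ) (h : i + 2 < m),
    ({f ⟨i, by omega⟩, f ⟨i + 1, by omega⟩, f ⟨i + 2, h⟩} : Finset V) ∈ E

/-- Number of tight `(x,y)`-`(z,w)`-paths of length `3(ℓ+1)` in `E`. -/
noncomputable def connCount (E : Finset (Finset V)) (ℓ : ℕ) (x y z w : V) : ℕ :=
  Nat.card {f : Fin (3*ℓ+5) → V // IsTightPath E f ∧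
    f ⟨0, by omega⟩ = x ∧ f ⟨1, by omega⟩ = y ∧
    f ⟨3*ℓ+3, by omega⟩ = z ∧ f ⟨3*ℓ+4, by omega⟩ = w}

/-- Number of tight `(x,y)`-`(z,w)`-paths of length `3(ℓ+1)` in `E` all of whose internal
vertices lie in `Res`. -/
noncomputable def connCountIn (E : Finset (Finset V)) (ℓ : ℕ) (Res : Finset V) (x y z w : V) : ℕ :=
  Nat.card {f : Fin (3*ℓ+5) → V // IsTightPath E f ∧
    f ⟨0, by omega⟩ = x ∧ f ⟨1, by omega⟩ = y ∧
    f ⟨3*ℓ+3, by omega⟩ = z ∧ f ⟨3*ℓ+4, by omega⟩ = w ∧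
    ∀ i : Fin (3*ℓ+5), 2 ≤ (i : ℕ) → (i : ℕ) ≤ 3*ℓ+2 → f i ∈ Res}

/-- Conclusion of the Connecting Lemma for the parameters `(ζ, θ)`. -/
def ConnProp (E : Finset (Finset V)) (Rv : V → Finset V) (ζ θ : ℝ) (ℓ : ℕ) : Prop :=
  ∀ x y z w : V, ([x, y, z, w] : List V).Nodup →
    Connectable E Rv ζ x y → Connectable E Rv ζ z w →
    θ * (Fintype.card V : ℝ) ^ (3*ℓ+1) ≤ (connCount E ℓ x y z w : ℝ)

/-- Conclusion of the Reservoir Lemma: every pair of `ζ`-connectable pairs is connected by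
many tight paths with all internal vertices in `Res`. -/
def ReservoirProp (E : Finset (Finset V)) (Rv : V → Finset V) (ζ θ : ℝ) (ℓ : ℕ)
    (Res : Finset V) : Prop :=
  ∀ x y z w : V, ([x, y, z, w] : List V).Nodup →
    Connectable E Rv ζ x y → Connectable E Rv ζ z w →
    θ * (Res.card : ℝ) ^ (3*ℓ+1) / 2 ≤ (connCountIn E ℓ Res x y z w : ℝ)

/-- Setup 2: the Connecting Lemma holds for `(ζ*,θ*)` and `(ζ**,θ**)` and `Res` is a
reservoir set. -/
def Setup2Hyp (ζs θs ζss θss : ℝ) (ℓ : ℕ) (E : Finset (Finset V)) (Rv : V → Finset V)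
    (Res : Finset V) : Prop :=
  ConnProp E Rv ζs θs ℓ ∧ ConnProp E Rv ζss θss ℓ ∧
  θs ^ 2 * (Fintype.card V : ℝ) / 2 ≤ (Res.card : ℝ) ∧
  (Res.card : ℝ) ≤ θs ^ 2 * (Fintype.card V : ℝ) ∧
  ReservoirProp E Rv ζss θss ℓ Res

/-- A vertex `z` is absorbable. -/
def Absorbable (E : Finset (Finset V)) (Rv : V → Finset V) (ζs : ℝ) (z : V) : Prop :=
  (Fintype.card V : ℝ) ^ 4 / 2 ^ 21 ≤
    (({q : V × V × V × V |
        ({q.1, q.2.1, z} : Finset V) ∈ E ∧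
        ({q.2.1, z, q.2.2.1} : Finset V) ∈ E ∧
        ({z, q.2.2.1, q.2.2.2} : Finset V) ∈ E ∧
        ({q.1, q.2.1, q.2.2.1} : Finset V) ∈ E ∧
        ({q.2.1, q.2.2.1, q.2.2.2} : Finset V) ∈ E ∧
        Connectable E Rv ζs q.1 q.2.1 ∧
        Connectable E Rv ζs q.2.2.1 q.2.2.2} : Set (V × V × V × V)).ncard : ℝ)

/-- `(a,b,c,d,z,x,y,y',x')` is a `v`-absorber. -/
def IsAbsorber (E : Finset (Finset V)) (Rv : V → Finset V) (ζs : ℝ)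
    (v a b c d z x y y' x' : V) : Prop :=
  ([a, b, c, d, z, x, y, y', x'] : List V).Nodup ∧
  v ∉ ([a, b, c, d, z, x, y, y', x'] : List V) ∧
  ({z, a, b} : Finset V) ∈ E ∧ ({z, b, c} : Finset V) ∈ E ∧ ({z, c, d} : Finset V) ∈ E ∧
  ({z, x, y} : Finset V) ∈ E ∧ ({z, y, y'} : Finset V) ∈ E ∧ ({z, y', x'} : Finset V) ∈ E ∧
  ({x, y, y'} : Finset V) ∈ E ∧ ({y, y', x'} : Finset V) ∈ E ∧
  Connectable E Rv ζs a b ∧ Connectable E Rv ζs c d ∧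
  Connectable E Rv ζs x y ∧ Connectable E Rv ζs y' x' ∧
  ({v, a, b} : Finset V) ∈ E ∧ ({v, b, c} : Finset V) ∈ E ∧ ({v, c, d} : Finset V) ∈ E

/-!
Read the cycle `x : ZMod n → V` through the pattern `S = {i | x i ∈ X}`. Since no edge meets `X` in
exactly two vertices, two consecutive positions in `S` force the next one into `S`, so they would
put all of `V` into `X`; hence `S` has no two consecutive positions, and then no two positions at
distance two either. The translates `S`, `S + 1`, `S + 2` are therefore disjoint, giving
`3 |X| ≤ n`.
-/

theorem Finset.mem_of_card_inter_ne_two {α : Type*} [DecidableEq α] {a b c : α} {X : Finset α}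
    (h3 : ({a, b, c} : Finset α).card = 3) (h2 : (({a, b, c} : Finset α) ∩ X).card ≠ 2)
    (ha : a ∈ X) (hb : b ∈ X) : c ∈ X := by
  by_contra hc
  have hinter : ({a, b, c} : Finset α) ∩ X = ({a, b, c} : Finset α).erase c := by
    ext v
    simp only [mem_inter, mem_erase, mem_insert, mem_singleton]
    constructor
    · rintro ⟨hv, hvX⟩
      exact ⟨fun h => hc (h ▸ hvX), hv⟩
    · rintro ⟨hvc, rfl | rfl | rfl⟩
      exacts [⟨Or.inl rfl, ha⟩, ⟨Or.inr (Or.inl rfl), hb⟩, absurd rfl hvc]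
  rw [hinter, card_erase_of_mem (by simp), h3] at h2
  exact h2 rfl

namespace ZMod

variable {n : ℕ} [NeZero n] {S : Finset (ZMod n)}

theorem eq_univ_of_add_one_mem (hS : S.Nonempty) (h : ∀ i ∈ S, i + 1 ∈ S) : S = Finset.univ := by
  obtain ⟨i, hi⟩ := hS
  have hshift : ∀ k : ℕ, i + k ∈ S := by
    intro k
    induction k with
    | zero => simpa using hi
    | succ k ih => simpa [← add_assoc] using h _ ih
  refine Finset.eq_univ_of_forall fun j => ?_
  simpa [natCast_zmod_val] using hshift (j - i).val

theorem add_one_notMem_of_ne_univ (hS : S ≠ Finset.univ)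
    (hclosed : ∀ i ∈ S, i + 1 ∈ S → i + 2 ∈ S) : ∀ i ∈ S, i + 1 ∉ S := by
  intro i hi hi1
  have hT : S.filter (· + 1 ∈ S) = Finset.univ := by
    refine eq_univ_of_add_one_mem ⟨i, Finset.mem_filter.mpr ⟨hi, hi1⟩⟩ fun k hk => ?_
    obtain ⟨hk, hk1⟩ := Finset.mem_filter.mp hk
    refine Finset.mem_filter.mpr ⟨hk1, ?_⟩
    simpa [add_assoc, one_add_one_eq_two] using hclosed k hk hk1
  exact hS (Finset.eq_univ_of_forall fun j => Finset.filter_subset _ S (hT ▸ Finset.mem_univ j))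

theorem three_mul_card_le_of_isolated (h1 : ∀ i ∈ S, i + 1 ∉ S) (h2 : ∀ i ∈ S, i + 2 ∉ S) :
    3 * S.card ≤ n := by
  let shift (c : ZMod n) : Finset (ZMod n) := S.map (addRightEmbedding c)
  have hmem : ∀ {c j}, j ∈ shift c ↔ j - c ∈ S := by simp [shift, ← eq_sub_iff_add_eq]
  have hdisj01 : Disjoint S (shift 1) :=
    Finset.disjoint_left.mpr fun {_} hj hj1 => h1 _ (hmem.mp hj1) (by simpa using hj)
  have hdisj02 : Disjoint S (shift 2) :=
    Finset.disjoint_left.mpr fun {_} hj hj2 => h2 _ (hmem.mp hj2) (by simpa using hj)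
  have hdisj12 : Disjoint (shift 1) (shift 2) := by
    refine Finset.disjoint_left.mpr fun {j} hj1 hj2 => h1 _ (hmem.mp hj2) ?_
    convert hmem.mp hj1 using 1
    ring
  calc 3 * S.card = (S ∪ shift 1 ∪ shift 2).card := by
        rw [Finset.card_union_of_disjoint (Finset.disjoint_union_left.mpr ⟨hdisj02, hdisj12⟩),
          Finset.card_union_of_disjoint hdisj01]
        simp only [shift, Finset.card_map]
        ring
    _ ≤ Fintype.card (ZMod n) := Finset.card_le_univ _
    _ = n := card n

theorem three_mul_card_le_of_ne_univ (hS : S ≠ Finset.univ)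
    (hclosed : ∀ i ∈ S, i + 1 ∈ S → i + 2 ∈ S) (hgap : ∀ i ∈ S, i + 2 ∈ S → i + 1 ∈ S) :
    3 * S.card ≤ n :=
  have h1 := add_one_notMem_of_ne_univ hS hclosed
  three_mul_card_le_of_isolated h1 fun i hi hi2 => h1 i hi (hgap i hi hi2)

end ZMod

theorem extremal_example_no_tight_ham_cycle_general
    (V : Type) [Fintype V] [DecidableEq V]
    (X : Finset V)
    (hX1 : (Fintype.card V : ℝ) / 3 < (X.card : ℝ)) (hX2 : X.card < Fintype.card V)
    (E : Finset (Finset V))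
    (hE : ∀ e : Finset V, e ∈ E ↔ e.card = 3 ∧ (e ∩ X).card ≠ 2) :
    ¬ HasTightHamCycle E := by
  rintro ⟨x, hx, hcyc⟩
  have : NeZero (Fintype.card V) := ⟨by omega⟩
  set S := X.map (Equiv.ofBijective x hx).symm.toEmbedding
  have hmem : ∀ i, i ∈ S ↔ x i ∈ X := fun i => Finset.mem_map_equiv
  have hcard : S.card = X.card := Finset.card_map _
  have hS : S ≠ Finset.univ := fun h => by
    rw [h, Finset.card_univ, ZMod.card] at hcard
    omega
  have hclosed : ∀ i ∈ S, i + 1 ∈ S → i + 2 ∈ S := fun i hi hi1 => by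
    obtain ⟨h3, h2⟩ := (hE _).mp (hcyc i)
    simp only [hmem] at hi hi1 ⊢
    exact Finset.mem_of_card_inter_ne_two h3 h2 hi hi1
  have hgap : ∀ i ∈ S, i + 2 ∈ S → i + 1 ∈ S := fun i hi hi2 => by
    obtain ⟨h3, h2⟩ := (hE _).mp (hcyc i)
    rw [Finset.pair_comm] at h3 h2
    simp only [hmem] at hi hi2 ⊢
    exact Finset.mem_of_card_inter_ne_two h3 h2 hi hi2
  have hle : 3 * X.card ≤ Fintype.card V :=
    hcard ▸ ZMod.three_mul_card_le_of_ne_univ hS hclosed hgap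
  have : (3 * X.card : ℝ) ≤ Fintype.card V := by exact_mod_cast hle
  linarith

theorem extremal_example_no_tight_ham_cycle
    (V : Type) [Fintype V] [DecidableEq V]
    (hn : 4 ≤ Fintype.card V) (X : Finset V)
    (hX1 : (Fintype.card V : ℝ) / 3 < (X.card : ℝ)) (hX2 : X.card < Fintype.card V)
    (E : Finset (Finset V))
    (hE : ∀ e : Finset V, e ∈ E ↔ e.card = 3 ∧ (e ∩ X).card ≠ 2) :
    ¬ HasTightHamCycle E :=
  extremal_example_no_tight_ham_cycle_general V X hX1 hX2 E hE
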